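/- arXiv:2305.15125 — 4 statements merged into one kernel-verified Lean document; each statement's English description precedes it below -/
import Mathlib

section
/- Let S be a subset of {0,1}^n with n ≥ 2, and let x be a point in the convex hull of S. Then there exists v* ∈ S such that ‖x − v*‖_∞ ≤ 1 − 1/n. -/
open Finset

/-! Let `c = 1 - 1/n` and call coordinate `i` high if `x i > c`, low if `x i < 1 - c`. A 0/1-vector
`v` is far from `x` (some `|x i - v i| > c`) only by a mistake: `v i = 0` at a high or `v i = 1` at a
low coordinate. The number of mistakes, written as `1 - v i` resp. `v i` summed over high resp. low
coordinates, is affine in `v` and at least `1` at far vertices; at `x` each coordinate contributes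
less than `1/n`, so its value is below `1`. By affineness, some vertex of `S` does as well as `x`. -/

noncomputable def coordMistake (c t s : ℝ) : ℝ :=
  if c < t then 1 - s else if t < 1 - c then s else 0

noncomputable def mistakes {ι : Type*} [Fintype ι] (c : ℝ) (x v : ι → ℝ) : ℝ :=
  ∑ i, coordMistake c (x i) (v i)

lemma coordMistake_add_of_add_eq_one (c t s s' : ℝ) {a b : ℝ} (hab : a + b = 1) :
    coordMistake c t (a * s + b * s') = a * coordMistake c t s + b * coordMistake c t s' := by
  unfold coordMistake
  split_ifs
  · linear_combination -hab
  all_goals ring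

lemma coordMistake_self_lt {c : ℝ} (hc : c < 1) (t : ℝ) : coordMistake c t t < 1 - c := by
  unfold coordMistake
  split_ifs <;> linarith

lemma coordMistake_nonneg_of_binary (c t : ℝ) {s : ℝ} (hs : s = 0 ∨ s = 1) :
    0 ≤ coordMistake c t s := by
  unfold coordMistake
  rcases hs with rfl | rfl <;> split_ifs <;> norm_num

lemma coordMistake_eq_one {c t s : ℝ} (hc : 1 - c ≤ c) (ht : t ∈ Set.Icc 0 1)
    (hs : s = 0 ∨ s = 1) (hts : c < |t - s|) : coordMistake c t s = 1 := by
  obtain ⟨ht0, ht1⟩ := ht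
  unfold coordMistake
  rcases hs with rfl | rfl
  · rw [sub_zero, abs_of_nonneg ht0] at hts
    simp [hts]
  · rw [abs_of_nonpos (by linarith)] at hts
    rw [if_neg (by linarith), if_pos (by linarith)]

lemma convexHull_subset_Icc_of_binary {ι : Type*} {S : Set (ι → ℝ)}
    (hS : ∀ v ∈ S, ∀ i, v i = 0 ∨ v i = 1) : convexHull ℝ S ⊆ Set.Icc 0 1 :=
  convexHull_min (fun v hv => ⟨fun i => by rcases hS v hv i with h | h <;> simp [h],
    fun i => by rcases hS v hv i with h | h <;> simp [h]⟩) (convex_Icc 0 1)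

section

variable {ι : Type*} [Fintype ι]

lemma concaveOn_mistakes (c : ℝ) (x : ι → ℝ) : ConcaveOn ℝ Set.univ (mistakes c x) := by
  refine ⟨convex_univ, fun u _ v _ a b _ _ hab => le_of_eq ?_⟩
  simp only [mistakes, smul_eq_mul, mul_sum, ← sum_add_distrib, Pi.add_apply, Pi.smul_apply,
    coordMistake_add_of_add_eq_one _ _ _ _ hab]

lemma mistakes_self_lt [Nonempty ι] {c : ℝ} (hc : c < 1) (x : ι → ℝ) :
    mistakes c x x < Fintype.card ι * (1 - c) := by
  calc mistakes c x x < ∑ _i : ι, (1 - c) :=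
        sum_lt_sum_of_nonempty univ_nonempty fun i _ => coordMistake_self_lt hc (x i)
    _ = Fintype.card ι * (1 - c) := by rw [sum_const, card_univ, nsmul_eq_mul]

lemma one_le_mistakes {c : ℝ} (hc : 1 - c ≤ c) {x v : ι → ℝ} (hx : x ∈ Set.Icc 0 1)
    (hv : ∀ i, v i = 0 ∨ v i = 1) {i : ι} (hi : c < |x i - v i|) : 1 ≤ mistakes c x v := by
  rw [← coordMistake_eq_one hc ⟨hx.1 i, hx.2 i⟩ (hv i) hi]
  exact single_le_sum (fun j _ => coordMistake_nonneg_of_binary c (x j) (hv j)) (mem_univ i)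

theorem exists_norm_sub_le_of_mem_convexHull_binary (hι : 2 ≤ Fintype.card ι)
    {S : Set (ι → ℝ)} (hS : ∀ v ∈ S, ∀ i, v i = 0 ∨ v i = 1) {x : ι → ℝ}
    (hx : x ∈ convexHull ℝ S) : ∃ v ∈ S, ‖x - v‖ ≤ 1 - 1 / Fintype.card ι := by
  have : Nonempty ι := Fintype.card_pos_iff.mp (by omega)
  have hcard : (2 : ℝ) ≤ Fintype.card ι := by exact_mod_cast hι
  have hinv_pos : 0 < 1 / (Fintype.card ι : ℝ) := by positivity
  have hinv_le : 1 / (Fintype.card ι : ℝ) ≤ 1 / 2 := one_div_le_one_div_of_le two_pos hcard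
  set c : ℝ := 1 - 1 / Fintype.card ι
  have hc : 1 - c ≤ c := by linarith
  obtain ⟨v, hvS, hvx⟩ :=
    (concaveOn_mistakes c x).exists_le_of_mem_convexHull (Set.subset_univ S) hx
  refine ⟨v, hvS, (pi_norm_le_iff_of_nonneg (by linarith)).mpr fun i => ?_⟩
  by_contra! hi
  have hfar := one_le_mistakes hc (convexHull_subset_Icc_of_binary hS hx) (hS v hvS) hi
  have hself := mistakes_self_lt (show c < 1 by linarith) x
  have hcard1 : (Fintype.card ι : ℝ) * (1 - c) = 1 := by simp only [c, sub_sub_cancel]; field_simp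
  linarith

end

/-- Unit-cube lemma: for S ⊆ {0,1}^n (n ≥ 2) and x ∈ conv(S), some v* ∈ S
satisfies ‖x − v*‖_∞ ≤ 1 − 1/n.  (Fin n → ℝ carries the sup norm.) -/
theorem stmt0 {n : ℕ} (hn : 2 ≤ n) (S : Set (Fin n → ℝ))
    (hS : ∀ v ∈ S, ∀ i, v i = 0 ∨ v i = 1)
    (x : Fin n → ℝ) (hx : x ∈ convexHull ℝ S) :
    ∃ v ∈ S, ‖x - v‖ ≤ 1 - 1 / n := by
  simpa using exists_norm_sub_le_of_mem_convexHull_binary (by simpa using hn) hS hx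
end

section
/- Let S ⊆ {0,1}^n, let x be in the convex hull of S, written x = Σ_{u∈S} λ_u u with λ_u ≥ 0 summing to 1. If λ_v ≥ 1/n for some v ∈ S, then ‖x − v‖_∞ ≤ 1 − 1/n. -/
open scoped BigOperators

open Finset in
theorem norm_sum_smul_sub_le_of_sum_eq_one {E : Type*} [SeminormedAddCommGroup E]
    [NormedSpace ℝ E] {S : Finset E} {lam : E → ℝ} (hnn : ∀ u ∈ S, 0 ≤ lam u)
    (hsum : ∑ u ∈ S, lam u = 1) {v : E} (hv : v ∈ S) {D : ℝ}
    (hD : ∀ u ∈ S, ‖u - v‖ ≤ D) :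
    ‖∑ u ∈ S, lam u • u - v‖ ≤ (1 - lam v) * D := by
  classical
  have hshift : ∑ u ∈ S, lam u • u - v = ∑ u ∈ S.erase v, lam u • (u - v) := by
    rw [sum_erase S (by rw [sub_self, smul_zero])]
    simp only [smul_sub, sum_sub_distrib, ← sum_smul, hsum, one_smul]
  have hrest : ∑ u ∈ S.erase v, lam u = 1 - lam v := by
    rw [← hsum, ← sum_erase_add S _ hv, add_sub_cancel_right]
  calc ‖∑ u ∈ S, lam u • u - v‖
      ≤ ∑ u ∈ S.erase v, ‖lam u • (u - v)‖ := hshift ▸ norm_sum_le _ _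
    _ ≤ ∑ u ∈ S.erase v, lam u * D := by
        refine sum_le_sum fun u hu => ?_
        have hu := mem_of_mem_erase hu
        rw [norm_smul, Real.norm_of_nonneg (hnn u hu)]
        exact mul_le_mul_of_nonneg_left (hD u hu) (hnn u hu)
    _ = (1 - lam v) * D := by rw [← sum_mul, hrest]

theorem pi_norm_sub_le_one_of_mem_Icc {ι : Type*} [Fintype ι] {u v : ι → ℝ}
    (hu : ∀ i, u i ∈ Set.Icc 0 1) (hv : ∀ i, v i ∈ Set.Icc 0 1) : ‖u - v‖ ≤ 1 :=
  (pi_norm_le_iff_of_nonneg zero_le_one).2 fun i => by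
    rw [Pi.sub_apply, Real.norm_eq_abs, abs_sub_le_iff]
    constructor <;> linarith [(hu i).1, (hu i).2, (hv i).1, (hv i).2]

theorem mem_Icc_of_eq_zero_or_eq_one {a : ℝ} (h : a = 0 ∨ a = 1) : a ∈ Set.Icc 0 1 := by
  rcases h with rfl | rfl <;> norm_num

/-- If x = Σ_{u∈S} λ_u u is a convex combination of 0-1 vectors and
λ_v ≥ 1/n for some v ∈ S, then ‖x − v‖_∞ ≤ 1 − 1/n. -/
theorem stmt1 {n : ℕ} (S : Finset (Fin n → ℝ))
    (hS : ∀ v ∈ S, ∀ i, v i = 0 ∨ v i = 1)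
    (lam : (Fin n → ℝ) → ℝ) (hnn : ∀ u ∈ S, 0 ≤ lam u)
    (hsum : ∑ u ∈ S, lam u = 1)
    (x : Fin n → ℝ) (hx : x = ∑ u ∈ S, lam u • u)
    (v : Fin n → ℝ) (hv : v ∈ S) (hlam : 1 / (n : ℝ) ≤ lam v) :
    ‖x - v‖ ≤ 1 - 1 / n := by
  have hdist : ∀ u ∈ S, ‖u - v‖ ≤ 1 := fun u hu =>
    pi_norm_sub_le_one_of_mem_Icc (fun i => mem_Icc_of_eq_zero_or_eq_one (hS u hu i))
      (fun i => mem_Icc_of_eq_zero_or_eq_one (hS v hv i))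
  calc ‖x - v‖ ≤ (1 - lam v) * 1 :=
        hx ▸ norm_sum_smul_sub_le_of_sum_eq_one hnn hsum hv hdist
    _ ≤ 1 - 1 / n := by linarith
end

section
/- (Shapley–Folkman lemma) Let S_1, …, S_m be nonempty subsets of ℝ^n and W = S_1 + ⋯ + S_m their Minkowski sum. For any x in the convex hull of W, there exists a subset I of {1,…,m} with |I| ≤ min(n,m) and points such that x ∈ conv(Σ_{i∈I} S_i) + Σ_{j∉I} S_j, i.e., x is the sum of an element of the convex hull of the Minkowski sum over I and elements z_j ∈ S_j for each j ∉ I. -/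
open scoped BigOperators Pointwise

noncomputable section

/-- Coercion of an integer vector to a real vector (sup-norm space). -/
def coeZR {n : ℕ} (v : Fin n → ℤ) : Fin n → ℝ := fun i => (v i : ℝ)

/-- Minkowski sum of a finite family of subsets of ℝ^n. -/
def minkSum {n m : ℕ} (S : Fin m → Set (Fin n → ℝ)) : Set (Fin n → ℝ) :=
  {x | ∃ z : Fin m → (Fin n → ℝ), (∀ i, z i ∈ S i) ∧ x = ∑ i, z i}

/-- Minkowski sum of a finite family of subsets of ℤ^n. -/
def minkSumZ {n m : ℕ} (S : Fin m → Set (Fin n → ℤ)) : Set (Fin n → ℤ) :=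
  {x | ∃ z : Fin m → (Fin n → ℤ), (∀ i, z i ∈ S i) ∧ x = ∑ i, z i}

/-- Integral neighborhood N(x) of a real vector x. -/
def intNbhd {n : ℕ} (x : Fin n → ℝ) : Set (Fin n → ℤ) :=
  {z | ∀ i, |x i - (z i : ℝ)| < 1}

/-- Integral convexity of a set S ⊆ ℤ^n. -/
def IntegrallyConvex {n : ℕ} (S : Set (Fin n → ℤ)) : Prop :=
  S.Nonempty ∧ ∀ x ∈ convexHull ℝ (coeZR '' S),
    x ∈ convexHull ℝ (coeZR '' (S ∩ intNbhd x))

/-- Minkowski sum of the subfamily indexed by I. -/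
def minkSumOn {n m : ℕ} (I : Finset (Fin m)) (S : Fin m → Set (Fin n → ℝ)) :
    Set (Fin n → ℝ) :=
  {x | ∃ z : Fin m → (Fin n → ℝ), (∀ i ∈ I, z i ∈ S i) ∧ x = ∑ i ∈ I, z i}

/-!
Tag each point `v ∈ S i` as `(v, eᵢ) ∈ E × ℝ^ι` and let `m = |ι|`. If `x ∈ conv (∑ Sᵢ)` then
`(x, 𝟙) / m` is in the convex hull of the tagged points, which all lie on the affine hyperplane
where the `ℝ^ι`-coordinates sum to one; affinely independent points there are linearly
independent, so Carathéodory writes `(x, 𝟙) / m` as a positive combination of at most `dim E + m`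
tagged points. Each index `i` receives total weight `1 / m`, hence at least one point, and so at
most `dim E` indices receive two or more; every other `i` contributes a single point of `Sᵢ`.
-/

open Finset Module

theorem AffineIndependent.linearIndependent_of_forall_map_eq_one {k V κ : Type*} [Ring k]
    [AddCommGroup V] [Module k V] {p : κ → V} (hp : AffineIndependent k p) (φ : V →ₗ[k] k)
    (hφ : ∀ i, φ (p i) = 1) : LinearIndependent k p := by
  rw [linearIndependent_iff']
  intro s g hg
  refine hp.eq_zero_of_sum_eq_zero ?_ hg
  simpa [hφ] using congrArg φ hg

namespace ShapleyFolkman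

variable {E ι : Type*} [AddCommGroup E] [Module ℝ E]

def lift [DecidableEq ι] (i : ι) : E →ᵃ[ℝ] E × (ι → ℝ) :=
  (AffineMap.id ℝ E).prod (AffineMap.const ℝ E (Pi.single i 1))

@[simp]
theorem lift_apply [DecidableEq ι] (i : ι) (v : E) : lift i v = (v, Pi.single i 1) := rfl

theorem sum_smul_lift [DecidableEq ι] {κ : Type*} [Fintype κ] (c : κ → ι) (v : κ → E)
    (w : κ → ℝ) :
    ∑ k, w k • lift (c k) (v k) = (∑ k, w k • v k, fun i => ∑ k with c k = i, w k) := by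
  ext i
  · simp [Prod.fst_sum]
  · simp [Prod.snd_sum, Finset.sum_apply, Pi.single_apply, Finset.sum_filter, eq_comm]

theorem inv_card_smul_mem_convexHull_lift [DecidableEq ι] [Fintype ι] [Nonempty ι]
    {S : ι → Set E} {x : E} (hx : x ∈ convexHull ℝ (∑ i, S i)) :
    (Fintype.card ι : ℝ)⁻¹ • (x, 1) ∈ convexHull ℝ (⋃ i, lift i '' S i) := by
  rw [convexHull_sum, Set.mem_fintype_sum] at hx
  obtain ⟨y, hy, rfl⟩ := hx
  have hlift : ∀ i, lift i (y i) ∈ convexHull ℝ (⋃ i, lift i '' S i) := fun i =>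
    convexHull_mono (Set.subset_iUnion (fun i => lift i '' S i) i)
      ((lift i).image_convexHull (S i) ▸ Set.mem_image_of_mem _ (hy i))
  have hcard : (Fintype.card ι : ℝ) ≠ 0 := by positivity
  convert (convex_convexHull ℝ _).sum_mem (t := univ) (w := fun _ => (Fintype.card ι : ℝ)⁻¹)
    (fun _ _ => by positivity) (by simp [hcard]) (fun i _ => hlift i) using 1
  ext i <;> simp [Prod.fst_sum, Prod.snd_sum, Finset.smul_sum, Finset.sum_apply, Pi.single_apply]

open Classical in
theorem exists_sum_eq_card_notMem_add_card_le [Fintype ι] {κ : Type*} [Fintype κ]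
    {S : ι → Set E} (c : κ → ι) (v : κ → E) (w : κ → ℝ) (hv : ∀ k, v k ∈ S (c k))
    (hw : ∀ k, 0 ≤ w k) (hw1 : ∀ i, ∑ k with c k = i, w k = 1) :
    ∃ y : ι → E, (∀ i, y i ∈ convexHull ℝ (S i)) ∧ ∑ i, y i = ∑ k, w k • v k ∧
      #{i | y i ∉ S i} + Fintype.card ι ≤ Fintype.card κ := by
  set y : ι → E := fun i => ∑ k with c k = i, w k • v k
  have hfiber : ∀ i, 1 + (if y i ∉ S i then 1 else 0) ≤ #{k | c k = i} := by
    intro i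
    have hne : ({k | c k = i} : Finset κ).Nonempty := by
      by_contra h
      simpa [Finset.not_nonempty_iff_eq_empty.mp h] using hw1 i
    by_cases hyi : y i ∈ S i
    · simpa [hyi] using hne.card_pos
    · simp only [hyi, not_false_eq_true, if_true]
      by_contra! hlt
      have hone : #({k | c k = i} : Finset κ) = 1 := by have := hne.card_pos; omega
      obtain ⟨k, hk⟩ := Finset.card_eq_one.mp hone
      have hck : c k = i := by simpa using hk.ge (mem_singleton_self k)
      have hwk : w k = 1 := by simpa [hk] using hw1 i
      have hyk : y i = v k := by simp [y, hk, hwk]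
      exact hyi (hyk ▸ hck ▸ hv k)
  refine ⟨y, fun i => ?_, Finset.sum_fiberwise _ c _, ?_⟩
  · exact (convex_convexHull ℝ _).sum_mem (fun k _ => hw k) (hw1 i)
      (fun k hk => subset_convexHull ℝ _ ((Finset.mem_filter.mp hk).2 ▸ hv k))
  · calc #{i | y i ∉ S i} + Fintype.card ι
        = ∑ i, (1 + if y i ∉ S i then 1 else 0) := by
          rw [Finset.card_filter, Finset.sum_add_distrib]; simp [add_comm]
      _ ≤ ∑ i, #{k | c k = i} := Finset.sum_le_sum fun i _ => hfiber i
      _ = Fintype.card κ := (Finset.card_eq_sum_card_fiberwise (by simp)).symm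

open Classical in
theorem exists_sum_eq_card_notMem_le_finrank [FiniteDimensional ℝ E] [Fintype ι]
    {S : ι → Set E} {x : E} (hx : x ∈ convexHull ℝ (∑ i, S i)) :
    ∃ y : ι → E, (∀ i, y i ∈ convexHull ℝ (S i)) ∧ ∑ i, y i = x ∧
      #{i | y i ∉ S i} ≤ finrank ℝ E := by
  cases isEmpty_or_nonempty ι
  · refine ⟨0, isEmptyElim, ?_, by simp⟩
    simpa [eq_comm] using hx
  have hp := inv_card_smul_mem_convexHull_lift hx
  obtain ⟨κ, _, z, w, hzL, hz, hw, -, hwz⟩ := eq_pos_convex_span_of_mem_convexHull hp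
  choose c v hv hcv using fun k => Set.mem_iUnion.mp (hzL (Set.mem_range_self k))
  have hcard : Fintype.card κ ≤ finrank ℝ E + Fintype.card ι := by
    let φ : E × (ι → ℝ) →ₗ[ℝ] ℝ := ∑ i, (LinearMap.proj i).comp (LinearMap.snd ℝ E (ι → ℝ))
    have hφ : ∀ k, φ (z k) = 1 := fun k => by simp [φ, ← hcv]
    simpa using (hz.linearIndependent_of_forall_map_eq_one φ hφ).fintype_card_le_finrank
  simp only [← hcv, sum_smul_lift, Prod.ext_iff, Prod.smul_fst, Prod.smul_snd, funext_iff,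
    Pi.smul_apply, Pi.one_apply, smul_eq_mul, mul_one] at hwz
  have hm : (Fintype.card ι : ℝ) ≠ 0 := by positivity
  obtain ⟨y, hy, hyx, hycard⟩ := exists_sum_eq_card_notMem_add_card_le c v
    (fun k => Fintype.card ι * w k) hv (fun k => mul_nonneg (Nat.cast_nonneg _) (hw k).le)
    (fun i => by rw [← Finset.mul_sum, hwz.2 i, mul_inv_cancel₀ hm])
  refine ⟨y, hy, ?_, by omega⟩
  simp_rw [hyx, mul_smul, ← Finset.smul_sum, hwz.1, smul_inv_smul₀ hm]

end ShapleyFolkman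

theorem minkSum_eq_sum {n m : ℕ} (S : Fin m → Set (Fin n → ℝ)) : minkSum S = ∑ i, S i := by
  ext x
  simp [minkSum, Set.mem_fintype_sum, eq_comm]

theorem minkSumOn_eq_sum {n m : ℕ} (I : Finset (Fin m)) (S : Fin m → Set (Fin n → ℝ)) :
    minkSumOn I S = ∑ i ∈ I, S i := by
  ext x
  simp [minkSumOn, Set.mem_finsetSum, eq_comm]

theorem stmt4_general {n m : ℕ} (S : Fin m → Set (Fin n → ℝ))
    (x : Fin n → ℝ) (hx : x ∈ convexHull ℝ (minkSum S)) :
    ∃ I : Finset (Fin m), I.card ≤ min n m ∧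
      ∃ y ∈ convexHull ℝ (minkSumOn I S), ∃ z : Fin m → (Fin n → ℝ),
        (∀ j ∈ Iᶜ, z j ∈ S j) ∧ x = y + ∑ j ∈ Iᶜ, z j := by
  classical
  rw [minkSum_eq_sum] at hx
  obtain ⟨y, hy, rfl, hcard⟩ := ShapleyFolkman.exists_sum_eq_card_notMem_le_finrank hx
  let I : Finset (Fin m) := {i | y i ∉ S i}
  refine ⟨I, le_min (by simpa using hcard) ((card_le_univ I).trans (by simp)), ∑ i ∈ I, y i, ?_,
    y, fun j hj => by simpa [I] using hj, (sum_add_sum_compl I y).symm⟩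
  rw [minkSumOn_eq_sum, convexHull_sum]
  exact Set.finsetSum_mem_finsetSum _ _ _ fun i _ => hy i

/-- Shapley–Folkman lemma. -/
theorem stmt4 {n m : ℕ} (S : Fin m → Set (Fin n → ℝ)) (hne : ∀ i, (S i).Nonempty)
    (x : Fin n → ℝ) (hx : x ∈ convexHull ℝ (minkSum S)) :
    ∃ I : Finset (Fin m), I.card ≤ min n m ∧
      ∃ y ∈ convexHull ℝ (minkSumOn I S), ∃ z : Fin m → (Fin n → ℝ),
        (∀ j ∈ Iᶜ, z j ∈ S j) ∧ x = y + ∑ j ∈ Iᶜ, z j :=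
  stmt4_general S x hx
end
end

section
/- Let S_1, …, S_m be integrally convex subsets of ℤ^n with n ≥ 2, and W = S_1 + ⋯ + S_m. For any x in the convex hull of W, there exists z ∈ W with ‖x − z‖_∞ ≤ (1 − 1/n)·min(n,m). -/
/-
Write `x = ∑ xᵢ` with `xᵢ ∈ conv Sᵢ`. By the Shapley–Folkman lemma the `xᵢ` can be replaced by
`yᵢ ∈ conv Sᵢ` with the same sum such that all but at most `n` of them lie in `Sᵢ`. Each remaining
`yᵢ` is rounded, using integral convexity, to a point of `Sᵢ ∩ N(yᵢ)` within `1 - 1/n` in every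
coordinate: if every point of `Sᵢ ∩ N(yᵢ)` had a coordinate farther than `1 - 1/n` from `yᵢ`, an
affine function built coordinatewise from the fractional parts of `yᵢ` would be `≥ 1` on all these
points but `< 1` at `yᵢ`, contradicting `yᵢ ∈ conv (Sᵢ ∩ N(yᵢ))`.
-/

open scoped BigOperators Pointwise

noncomputable section

open Finset Module

lemma coeZR_sum {n m : ℕ} (z : Fin m → Fin n → ℤ) : coeZR (∑ i, z i) = ∑ i, coeZR (z i) := by
  funext c
  simp [coeZR, Finset.sum_apply]

lemma Int.eq_floor_or_eq_floor_add_one_of_abs_sub_lt_one {a : ℝ} {k : ℤ} (hk : |a - k| < 1) :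
    k = ⌊a⌋ ∨ k = ⌊a⌋ + 1 := by
  rw [abs_lt] at hk
  have hlo : ⌊a⌋ < k + 1 := Int.floor_lt.2 (by push_cast; linarith)
  have hhi : k - 1 ≤ ⌊a⌋ := Int.le_floor.2 (by push_cast; linarith)
  omega

lemma exists_affine_separating_far_neighbor {δ : ℝ} (hδ : 0 < δ) (hδ2 : δ ≤ 1 / 2) (a : ℝ) :
    ∃ s t : ℝ, s * (a - t) < δ ∧ ∀ k : ℤ, |a - k| < 1 →
      0 ≤ s * (k - t) ∧ (1 - δ < |a - k| → s * (k - t) = 1) := by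
  have h0 := Int.fract_nonneg a
  have h1 := Int.fract_lt_one a
  have ha : a = ⌊a⌋ + Int.fract a := (Int.floor_add_fract a).symm
  have hfloor : |a - ⌊a⌋| = Int.fract a := by rw [Int.self_sub_floor, abs_of_nonneg h0]
  have hceil : |a - (⌊a⌋ + 1)| = 1 - Int.fract a := by
    rw [abs_of_neg (by linarith)]
    linarith
  suffices ∃ s t : ℝ, s * (a - t) < δ ∧ 0 ≤ s * (⌊a⌋ - t) ∧ 0 ≤ s * (⌊a⌋ + 1 - t) ∧
      (1 - δ < Int.fract a → s * (⌊a⌋ - t) = 1) ∧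
      (1 - δ < 1 - Int.fract a → s * (⌊a⌋ + 1 - t) = 1) by
    obtain ⟨s, t, hst, hfl, hce, hfl1, hce1⟩ := this
    refine ⟨s, t, hst, fun k hk => ?_⟩
    rcases Int.eq_floor_or_eq_floor_add_one_of_abs_sub_lt_one hk with rfl | rfl
    · exact ⟨hfl, hfloor ▸ hfl1⟩
    · push_cast
      exact ⟨hce, hceil ▸ hce1⟩
  -- `t` is the integer within `δ` of `a`, if there is one, and `s` the sign of `a - t`.
  by_cases hlo : Int.fract a < δ
  · refine ⟨1, ⌊a⌋, ?_, ?_, ?_, ?_, ?_⟩ <;> intros <;> linarith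
  by_cases hhi : 1 - δ < Int.fract a
  · refine ⟨-1, ⌊a⌋ + 1, ?_, ?_, ?_, ?_, ?_⟩ <;> intros <;> linarith
  · refine ⟨0, 0, ?_, ?_, ?_, ?_, ?_⟩ <;> intros <;> linarith

lemma convex_setOf_le_sum_mul_sub {ι : Type*} [Fintype ι] (s t : ι → ℝ) (r : ℝ) :
    Convex ℝ {y : ι → ℝ | r ≤ ∑ c, s c * (y c - t c)} := by
  intro u hu v hv a b ha hb hab
  have hsplit : ∑ c, s c * ((a • u + b • v) c - t c)
      = a * ∑ c, s c * (u c - t c) + b * ∑ c, s c * (v c - t c) := by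
    rw [mul_sum, mul_sum, ← sum_add_distrib]
    refine sum_congr rfl fun c _ => ?_
    simp only [Pi.add_apply, Pi.smul_apply, smul_eq_mul]
    linear_combination (s c * t c) * hab
  change r ≤ _ at hu hv ⊢
  rw [hsplit]
  calc r = a * r + b * r := by rw [← add_mul, hab, one_mul]
    _ ≤ _ := add_le_add (mul_le_mul_of_nonneg_left hu ha) (mul_le_mul_of_nonneg_left hv hb)

lemma exists_mem_abs_sub_le_of_subset_intNbhd {n : ℕ} (hn : 2 ≤ n) {T : Set (Fin n → ℤ)}
    {x : Fin n → ℝ} (hT : T ⊆ intNbhd x) (hx : x ∈ convexHull ℝ (coeZR '' T)) :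
    ∃ v ∈ T, ∀ c, |x c - v c| ≤ 1 - 1 / n := by
  by_contra! hfar
  have hδ : (0 : ℝ) < 1 / n := by positivity
  have hδ2 : (1 : ℝ) / n ≤ 1 / 2 := by
    gcongr
    exact_mod_cast hn
  choose s t hxst hst using fun c => exists_affine_separating_far_neighbor hδ hδ2 (x c)
  have hT1 : coeZR '' T ⊆ {y | 1 ≤ ∑ c, s c * (y c - t c)} := by
    rintro _ ⟨v, hv, rfl⟩
    obtain ⟨c, hc⟩ := hfar v hv
    calc (1 : ℝ) = s c * (v c - t c) := ((hst c (v c) (hT hv c)).2 hc).symm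
      _ ≤ ∑ c, s c * (v c - t c) :=
        single_le_sum (fun c _ => (hst c (v c) (hT hv c)).1) (mem_univ c)
  have hx1 := convexHull_min hT1 (convex_setOf_le_sum_mul_sub s t 1) hx
  have : Nonempty (Fin n) := ⟨⟨0, by omega⟩⟩
  have hx1' : ∑ c, s c * (x c - t c) < 1 :=
    calc ∑ c, s c * (x c - t c) < ∑ _c : Fin n, (1 / n : ℝ) :=
          sum_lt_sum_of_nonempty univ_nonempty fun c _ => hxst c
      _ = 1 := by
        rw [sum_const, card_univ, Fintype.card_fin, nsmul_eq_mul]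
        exact mul_one_div_cancel (by positivity)
  exact hx1'.not_ge hx1

lemma AffineIndependent.card_le_finrank_of_forall_eq_one {k V κ : Type*} [Field k]
    [AddCommGroup V] [Module k V] [FiniteDimensional k V] [Fintype κ] {p : κ → V}
    (hp : AffineIndependent k p) (f : Dual k V) (hf : ∀ j, f (p j) = 1) :
    Fintype.card κ ≤ finrank k V := by
  cases isEmpty_or_nonempty κ
  · simp
  obtain ⟨j⟩ := ‹Nonempty κ›
  have hf0 : f ≠ 0 := fun h => by simpa [h] using hf j
  have hspan : vectorSpan k (Set.range p) ≤ LinearMap.ker f := by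
    rw [vectorSpan_def, Submodule.span_le]
    rintro _ ⟨_, ⟨i, rfl⟩, _, ⟨i', rfl⟩, rfl⟩
    simp [hf]
  calc Fintype.card κ ≤ finrank k (vectorSpan k (Set.range p)) + 1 := hp.card_le_finrank_succ
    _ ≤ finrank k (LinearMap.ker f) + 1 := by gcongr; exact Submodule.finrank_mono hspan
    _ = finrank k V := f.finrank_ker_add_one_of_ne_zero hf0

lemma Function.Surjective.card_add_card_filter_one_lt_card_fiber_le {ι κ : Type*} [Fintype ι]
    [Fintype κ] [DecidableEq ι] {c : κ → ι} (hc : Function.Surjective c) :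
    Fintype.card ι + #{i | 1 < #{j | c j = i}} ≤ Fintype.card κ := by
  have hfib : ∀ i, 1 + (if 1 < #{j | c j = i} then 1 else 0) ≤ #{j | c j = i} := by
    intro i
    obtain ⟨j, rfl⟩ := hc i
    have : 0 < #{j' | c j' = c j} := card_pos.2 ⟨j, by simp⟩
    split_ifs <;> omega
  calc Fintype.card ι + #{i | 1 < #{j | c j = i}}
      = ∑ i, (1 + if 1 < #{j | c j = i} then 1 else 0) := by
        rw [sum_add_distrib, card_filter]; simp
    _ ≤ ∑ i, #{j | c j = i} := sum_le_sum fun i _ => hfib i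
    _ = Fintype.card κ := (card_eq_sum_card_fiberwise (by simp)).symm

section ShapleyFolkman

variable {𝕜 E ι : Type*} [Field 𝕜] [LinearOrder 𝕜] [IsStrictOrderedRing 𝕜]
  [AddCommGroup E] [Module 𝕜 E] [Fintype ι]

lemma exists_sum_eq_of_sum_fiber_eq_one {κ : Type*} [Fintype κ] [DecidableEq ι]
    (A : ι → Set E) {c : κ → ι} {a : κ → E} {w : κ → 𝕜} (ha : ∀ j, a j ∈ A (c j))
    (hw0 : ∀ j, 0 ≤ w j) (hw1 : ∀ i, ∑ j with c j = i, w j = 1) :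
    ∃ (y : ι → E) (s : Finset ι), Fintype.card ι + #s ≤ Fintype.card κ ∧
      (∀ i ∉ s, y i ∈ A i) ∧ (∀ i, y i ∈ convexHull 𝕜 (A i)) ∧ ∑ i, y i = ∑ j, w j • a j := by
  have hc : Function.Surjective c := fun i => by
    obtain ⟨j, hj, -⟩ := exists_ne_zero_of_sum_ne_zero ((hw1 i).symm ▸ one_ne_zero)
    exact ⟨j, (mem_filter.1 hj).2⟩
  refine ⟨fun i => ∑ j with c j = i, w j • a j, ({i | 1 < #{j | c j = i}} : Finset ι),
    hc.card_add_card_filter_one_lt_card_fiber_le, fun i hi => ?_, fun i => ?_,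
    sum_fiberwise univ c _⟩
  · obtain ⟨j, hj⟩ : ∃ j, ({j | c j = i} : Finset κ) = {j} := by
      obtain ⟨j, rfl⟩ := hc i
      exact card_eq_one.1 (le_antisymm (by simpa using hi) (card_pos.2 ⟨j, by simp⟩))
    have hwj := hw1 i
    change ∑ j ∈ _, _ ∈ A i
    rw [hj, sum_singleton] at hwj ⊢
    have hcj : c j = i := by simpa using hj.ge (mem_singleton_self j)
    simpa [hwj, hcj] using ha j
  · refine (convex_convexHull 𝕜 (A i)).sum_mem (fun j _ => hw0 j) (hw1 i) fun j hj => ?_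
    exact subset_convexHull 𝕜 _ ((mem_filter.1 hj).2 ▸ ha j)

lemma mem_convexHull_iUnion_image_prodMk_single [Nonempty ι] [DecidableEq ι] {A : ι → Set E}
    {x : ι → E} (hx : ∀ i, x i ∈ convexHull 𝕜 (A i)) :
    ((Fintype.card ι : 𝕜)⁻¹ • ∑ i, x i, fun _ => (Fintype.card ι : 𝕜)⁻¹) ∈
      convexHull 𝕜 (⋃ i, (fun a => (a, Pi.single i (1 : 𝕜))) '' A i) := by
  have hm : (Fintype.card ι : 𝕜) ≠ 0 := Nat.cast_ne_zero.2 Fintype.card_ne_zero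
  have hpt : ((Fintype.card ι : 𝕜)⁻¹ • ∑ i, x i, fun _ => (Fintype.card ι : 𝕜)⁻¹) =
      ∑ i, (Fintype.card ι : 𝕜)⁻¹ • (x i, Pi.single i (1 : 𝕜)) := by
    ext k
    · simp [Prod.fst_sum, smul_sum]
    · simp [Prod.snd_sum, Finset.sum_apply, Pi.single_apply]
  rw [hpt]
  refine (convex_convexHull 𝕜 _).sum_mem (fun _ _ => by positivity) (by simp [hm]) fun i _ => ?_
  let f : E →ᵃ[𝕜] E × (ι → 𝕜) := (AffineMap.id 𝕜 E).prod (AffineMap.const 𝕜 E (Pi.single i 1))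
  have hf : f '' convexHull 𝕜 (A i) = convexHull 𝕜 (f '' A i) := f.image_convexHull (A i)
  exact convexHull_mono (Set.subset_iUnion (fun i => (fun a => (a, Pi.single i (1 : 𝕜))) '' A i) i)
    (hf ▸ Set.mem_image_of_mem f (hx i))

theorem shapley_folkman [FiniteDimensional 𝕜 E] (A : ι → Set E) {x : ι → E}
    (hx : ∀ i, x i ∈ convexHull 𝕜 (A i)) :
    ∃ (y : ι → E) (s : Finset ι), #s ≤ finrank 𝕜 E ∧
      (∀ i ∉ s, y i ∈ A i) ∧ (∀ i, y i ∈ convexHull 𝕜 (A i)) ∧ ∑ i, y i = ∑ i, x i := by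
  classical
  cases isEmpty_or_nonempty ι
  · exact ⟨x, ∅, by simp, fun i => isEmptyElim i, hx, rfl⟩
  -- Carathéodory in `E × (ι → 𝕜)`: the points found lie on the hyperplane `∑ u = 1`, so there are
  -- at most `finrank E + card ι` of them, and every fiber of their index map `c` is nonempty.
  have h := mem_convexHull_iUnion_image_prodMk_single (𝕜 := 𝕜) hx
  obtain ⟨κ, _, z, w, hzA, hz, hw0, -, hwz⟩ := eq_pos_convex_span_of_mem_convexHull h
  have hzA' : ∀ j, ∃ i, ∃ a ∈ A i, (a, Pi.single i (1 : 𝕜)) = z j := by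
    simpa only [Set.mem_iUnion, Set.mem_image] using fun j => hzA (Set.mem_range_self j)
  choose c a ha hca using hzA'
  have hcard : Fintype.card κ ≤ finrank 𝕜 E + Fintype.card ι := by
    have := hz.card_le_finrank_of_forall_eq_one
      ((∑ i, LinearMap.proj i) ∘ₗ LinearMap.snd 𝕜 E (ι → 𝕜)) fun j => by simp [← hca]
    simpa only [finrank_prod, finrank_fintype_fun_eq_card] using this
  have hm : (Fintype.card ι : 𝕜) ≠ 0 := Nat.cast_ne_zero.2 Fintype.card_ne_zero
  have hfib : ∀ i, ∑ j with c j = i, (Fintype.card ι : 𝕜) * w j = 1 := by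
    intro i
    have := congrArg (fun p => p.2 i) hwz
    simp only [← hca, Prod.smul_mk, Prod.snd_sum, Finset.sum_apply, Pi.smul_apply, Pi.single_apply,
      smul_eq_mul, mul_ite, mul_one, mul_zero] at this
    simp_rw [← mul_sum, sum_filter, @eq_comm _ (c _) i, this, mul_inv_cancel₀ hm]
  have hsum : ∑ j, ((Fintype.card ι : 𝕜) * w j) • a j = ∑ i, x i := by
    have := congrArg Prod.fst hwz
    simp only [← hca, Prod.smul_mk, Prod.fst_sum] at this
    simp_rw [mul_smul, ← smul_sum, this, smul_inv_smul₀ hm]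
  obtain ⟨y, s, hs, hyA, hy, hys⟩ := exists_sum_eq_of_sum_fiber_eq_one A ha
    (fun j => (mul_pos (Nat.cast_pos.2 Fintype.card_pos) (hw0 j)).le) hfib
  exact ⟨y, s, by omega, hyA, hy, hys.trans hsum⟩

end ShapleyFolkman

lemma exists_eq_sum_of_mem_convexHull_minkSumZ {n m : ℕ} (S : Fin m → Set (Fin n → ℤ))
    {x : Fin n → ℝ} (hx : x ∈ convexHull ℝ (coeZR '' minkSumZ S)) :
    ∃ y : Fin m → Fin n → ℝ, (∀ i, y i ∈ convexHull ℝ (coeZR '' S i)) ∧ ∑ i, y i = x := by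
  have hsub : coeZR '' minkSumZ S ⊆ ∑ i, coeZR '' S i := by
    rintro _ ⟨_, ⟨z, hz, rfl⟩, rfl⟩
    rw [coeZR_sum]
    exact Set.finsetSum_mem_finsetSum _ _ _ fun i _ => Set.mem_image_of_mem _ (hz i)
  have hx' := convexHull_mono hsub hx
  rw [convexHull_sum, Set.mem_fintype_sum] at hx'
  obtain ⟨y, hy, rfl⟩ := hx'
  exact ⟨y, hy, rfl⟩

lemma IntegrallyConvex.exists_norm_sub_le {n : ℕ} (hn : 2 ≤ n) {S : Set (Fin n → ℤ)}
    (hS : IntegrallyConvex S) {y : Fin n → ℝ} (hy : y ∈ convexHull ℝ (coeZR '' S)) :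
    ∃ v ∈ S, ‖y - coeZR v‖ ≤ 1 - 1 / n := by
  obtain ⟨v, hv, hvy⟩ :=
    exists_mem_abs_sub_le_of_subset_intNbhd hn Set.inter_subset_right (hS.2 y hy)
  have hδ : (0 : ℝ) ≤ 1 - 1 / n := sub_nonneg.2 (by simpa [one_div] using Nat.cast_inv_le_one n)
  exact ⟨v, hv.1, (pi_norm_le_iff_of_nonneg hδ).2 fun c => by simpa [coeZR] using hvy c⟩

theorem stmt9_general {n m : ℕ} (hn : 2 ≤ n)
    (S : Fin m → Set (Fin n → ℤ)) (hS : ∀ i, IntegrallyConvex (S i))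
    (x : Fin n → ℝ) (hx : x ∈ convexHull ℝ (coeZR '' minkSumZ S)) :
    ∃ z ∈ minkSumZ S, ‖x - coeZR z‖ ≤ (1 - 1 / n) * min n m := by
  obtain ⟨x', hx', rfl⟩ := exists_eq_sum_of_mem_convexHull_minkSumZ S hx
  obtain ⟨y, s, hs, hyS, hy, hyx⟩ := shapley_folkman (fun i => coeZR '' S i) hx'
  have hz : ∀ i, ∃ z ∈ S i, ‖y i - coeZR z‖ ≤ if i ∈ s then 1 - 1 / (n : ℝ) else 0 := by
    intro i
    split_ifs with hi
    · exact (hS i).exists_norm_sub_le hn (hy i)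
    · obtain ⟨z, hz, hzy⟩ := hyS i hi
      exact ⟨z, hz, by simp [hzy]⟩
  choose z hzS hzy using hz
  refine ⟨∑ i, z i, ⟨z, hzS, rfl⟩, ?_⟩
  rw [finrank_fin_fun] at hs
  calc ‖∑ i, x' i - coeZR (∑ i, z i)‖ = ‖∑ i, (y i - coeZR (z i))‖ := by
        rw [coeZR_sum, sum_sub_distrib, hyx]
    _ ≤ ∑ i, ‖y i - coeZR (z i)‖ := norm_sum_le _ _
    _ ≤ ∑ i, if i ∈ s then 1 - 1 / (n : ℝ) else 0 := sum_le_sum fun i _ => hzy i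
    _ = #s * (1 - 1 / n) := by rw [sum_ite_mem, univ_inter, sum_const, nsmul_eq_mul]
    _ ≤ (1 - 1 / n) * min n m := by
        rw [mul_comm]
        gcongr
        · exact sub_nonneg.2 (by simpa [one_div] using Nat.cast_inv_le_one n)
        · exact_mod_cast le_min hs (card_le_univ s |>.trans_eq (Fintype.card_fin m))

/-- Shapley–Folkman-type theorem for integrally convex sets (ℓ∞ bound). -/
theorem stmt9 {n m : ℕ} (hn : 2 ≤ n) (hm : 1 ≤ m)
    (S : Fin m → Set (Fin n → ℤ)) (hS : ∀ i, IntegrallyConvex (S i))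
    (x : Fin n → ℝ) (hx : x ∈ convexHull ℝ (coeZR '' minkSumZ S)) :
    ∃ z ∈ minkSumZ S, ‖x - coeZR z‖ ≤ (1 - 1 / n) * min n m :=
  stmt9_general hn S hS x hx
end
end
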